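/- Let e ≥ 3 and 0 < a < b < c ≤ d ≤ e, and let B be the block of e-weight 4 with notation ⟨4^a, 5^{b−a}, 6^{c−b}, 5^{d−c}, 4^{e−d}⟩, which forms exactly two [4:1]-pairs, via the residues carried by runner a and by runner b respectively. If a partition λ lying in B is exceptional for both pairs, then b − a ≥ 2 and λ = ⟨a_{(1,1)}, b_{(1,1)}⟩. -/

import Mathlib

/-- A partition: a weakly decreasing function `parts : ℕ → ℕ` (0-indexed),
having exactly `len` nonzero parts. -/
structure AbacusPartition where
  parts : ℕ → ℕ
  antitone : Antitone parts
  len : ℕ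
  pos_of_lt : ∀ i, i < len → 0 < parts i
  zero_of_ge : ∀ i, len ≤ i → parts i = 0

/-- The beta-set (abacus display) of a partition with `r` beads:
positions `λ_i + r - i` for `1 ≤ i ≤ r` (0-indexed: `parts i + (r - 1 - i)`). -/
def AbacusPartition.betaSet (lam : AbacusPartition) (r : ℕ) : Finset ℕ :=
  (Finset.range r).image (fun i => lam.parts i + (r - 1 - i))

/-- e-weight of the bead at position `p` of the display `B`: the number of
unoccupied positions `q < p` with `q ≡ p (mod e)`. -/
def beadWeight (e : ℕ) (B : Finset ℕ) (p : ℕ) : ℕ :=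
  ((Finset.range p).filter (fun q => q % e = p % e ∧ q ∉ B)).card

/-- Total e-weight of the display `B`. -/
def abacusWeight (e : ℕ) (B : Finset ℕ) : ℕ :=
  B.sum (fun p => beadWeight e B p)

/-- e-weight of a partition (computed from the display with `lam.len` beads). -/
def eWeight (e : ℕ) (lam : AbacusPartition) : ℕ :=
  abacusWeight e (lam.betaSet lam.len)

/-- Positions on runner `res` (positions `p` with `p % e = res`), in increasing
order, up to a bound strictly beyond every bead. -/
def posList (e : ℕ) (B : Finset ℕ) (res : ℕ) : List ℕ :=
  (List.range (B.sup id + e + 2)).filter (fun p => p % e == res)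

/-- One step of the signature-reduction automaton; the state is
`(list of surviving '+' positions, stack of pending '−' positions)`.
A '−' occurs at `p` when `p` is occupied and its preceding position unoccupied
(position `-1` counts as occupied); a '+' occurs at `p` when `p` is unoccupied
and its preceding position occupied.  A '+' cancels the most recent pending '−'. -/
def signStep (B : Finset ℕ) (st : List ℕ × List ℕ) (p : ℕ) : List ℕ × List ℕ :=
  if p ∈ B ∧ ¬(p = 0 ∨ p - 1 ∈ B) then (st.1, p :: st.2)
  else if p ∉ B ∧ (p = 0 ∨ p - 1 ∈ B) then
    (match st.2 with
     | [] => (p :: st.1, ([] : List ℕ))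
     | _ :: tl => (st.1, tl))
  else st

/-- Final state of the reduction of the `j`-signature on runner `res`:
`(surviving '+' (conormal) positions, surviving '−' (normal) positions)`,
each list in decreasing order of position. -/
def signState (e : ℕ) (B : Finset ℕ) (res : ℕ) : List ℕ × List ℕ :=
  (posList e B res).foldl (signStep B) ([], [])

/-- Positions of the normal beads on runner `res`, in decreasing order. -/
def normalList (e : ℕ) (B : Finset ℕ) (res : ℕ) : List ℕ := (signState e B res).2

/-- The conormal positions on runner `res`, in decreasing order. -/
def conormalList (e : ℕ) (B : Finset ℕ) (res : ℕ) : List ℕ := (signState e B res).1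

/-- ε: the number of normal beads on runner `res`. -/
def epsB (e : ℕ) (B : Finset ℕ) (res : ℕ) : ℕ := (normalList e B res).length

/-- φ: the number of conormal positions on runner `res`. -/
def phiB (e : ℕ) (B : Finset ℕ) (res : ℕ) : ℕ := (conormalList e B res).length

/-- ε_j of a partition: in the display with `lam.len` beads, residue `j`
is carried by runner `(j + lam.len) % e`. -/
def epsP (e : ℕ) (lam : AbacusPartition) (j : ℕ) : ℕ :=
  epsB e (lam.betaSet lam.len) ((j + lam.len) % e)

/-- φ_j of a partition. -/
def phiP (e : ℕ) (lam : AbacusPartition) (j : ℕ) : ℕ :=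
  phiB e (lam.betaSet lam.len) ((j + lam.len) % e)

/-- Move each bead in `ps` from its position `p` to `p - 1`. -/
def moveDown (B : Finset ℕ) (ps : List ℕ) : Finset ℕ :=
  ps.foldl (fun C p => insert (p - 1) (C.erase p)) B

/-- For each position `p` in `ps`, move the bead at `p - 1` to `p`. -/
def moveUp (B : Finset ℕ) (ps : List ℕ) : Finset ℕ :=
  ps.foldl (fun C p => insert p (C.erase (p - 1))) B

/-- Ẽ^t on displays: move the `t` normal beads at the smallest positions down. -/
def Etil (e : ℕ) (B : Finset ℕ) (res t : ℕ) : Finset ℕ :=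
  moveDown B ((normalList e B res).reverse.take t)

/-- F̃^t on displays: for the `t` largest conormal positions `p`,
move the bead at `p - 1` to `p`. -/
def Ftil (e : ℕ) (B : Finset ℕ) (res t : ℕ) : Finset ℕ :=
  moveUp B ((conormalList e B res).take t)

/-- Number of beads of `B` on runner `i`. -/
def runnerCount (e : ℕ) (B : Finset ℕ) (i : ℕ) : ℕ :=
  (B.filter (fun p => p % e = i)).card

/-- Sum of the e-weights of the beads of `B` on runner `i` (this is `|λ(i)|`). -/
def runnerWeight (e : ℕ) (B : Finset ℕ) (i : ℕ) : ℕ :=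
  (B.filter (fun p => p % e = i)).sum (beadWeight e B)

/-- The display of the e-core: slide every bead as far up its runner as possible. -/
def coreBeta (e : ℕ) (B : Finset ℕ) : Finset ℕ :=
  (Finset.range e).biUnion
    (fun i => (Finset.range (runnerCount e B i)).image (fun m => i + m * e))

/-- `lam` lies in the block with bead counts `bd 0, …, bd (e-1)` and e-weight `w`:
displayed with `r = bd 0 + ⋯ + bd (e-1)` beads it has `bd i` beads on runner `i`
and e-weight `w`. -/
def inBlock (e : ℕ) (bd : ℕ → ℕ) (w : ℕ) (lam : AbacusPartition) : Prop :=
  lam.len ≤ (Finset.range e).sum bd ∧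
  (∀ i < e, runnerCount e (lam.betaSet ((Finset.range e).sum bd)) i = bd i) ∧
  abacusWeight e (lam.betaSet ((Finset.range e).sum bd)) = w

/-- The single-runner beta-set of the partition with parts `ρ` and `c` beads. -/
def oneRunnerBeta (rho : List ℕ) (c : ℕ) : Finset ℕ :=
  (Finset.range c).image (fun t => rho.getD t 0 + (c - 1 - t))

/-- The display of the partition `⟨0_{lamOf 0}, …, (e−1)_{lamOf (e−1)} | bd 0, …, bd (e−1)⟩`. -/
def display (e : ℕ) (bd : ℕ → ℕ) (lamOf : ℕ → List ℕ) : Finset ℕ :=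
  (Finset.range e).biUnion
    (fun i => (oneRunnerBeta (lamOf i) (bd i)).image (fun m => i + m * e))

/-- The operator Ḟ at runner `res`: apply F̃^{φ} (valid when ε = 0 < φ). -/
def dotF (e : ℕ) (B : Finset ℕ) (res : ℕ) : Finset ℕ := Ftil e B res (phiB e B res)

/-- Apply a chain of Ḟ steps. -/
def chainFold (e : ℕ) : Finset ℕ → List ℕ → Finset ℕ
  | B, [] => B
  | B, i :: rest => chainFold e (dotF e B i) rest

/-- The chain of Ḟ steps is semisimple: at each step ε = 0 before, φ > 0 before,
and φ = 0 afterwards. -/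
def validChain (e : ℕ) : Finset ℕ → List ℕ → Prop
  | _, [] => True
  | B, i :: rest =>
      (epsB e B i = 0 ∧ 0 < phiB e B i ∧ phiB e (dotF e B i) i = 0) ∧
      validChain e (dotF e B i) rest

/-- `B` induces semisimply to `C` (displays with the same number of beads). -/
def InducesSS (e : ℕ) (B C : Finset ℕ) : Prop :=
  ∃ L : List ℕ, validChain e B L ∧ chainFold e B L = C

/-- Re-display a beta-set with `s` additional beads. -/
def shiftBeta (B : Finset ℕ) (s : ℕ) : Finset ℕ :=
  B.image (· + s) ∪ Finset.range s

/-- `B` induces semisimply to the partition displayed by `C` (where `C` may use a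
different number of beads). -/
def InducesToPartition (e : ℕ) (B C : Finset ℕ) : Prop :=
  ∃ D : Finset ℕ, InducesSS e B D ∧ shiftBeta D C.card = shiftBeta C D.card

/-- The block with bead counts `bd` and weight `w` is Rouquier:
for all `i < j < e`, `bd i − bd j ≥ w` or `bd j − bd i ≥ w − 1`. -/
def IsRouquier (e w : ℕ) (bd : ℕ → ℕ) : Prop :=
  ∀ i j, i < j → j < e → bd j + w ≤ bd i ∨ bd i + (w - 1) ≤ bd j

/-- `lam` is e-singular: it has `e` consecutive equal nonzero parts. -/
def ESingular (e : ℕ) (lam : AbacusPartition) : Prop :=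
  ∃ i, lam.parts i ≠ 0 ∧ ∀ m < e, lam.parts (i + m) = lam.parts i

/-- `lam` is e-regular. -/
def ERegular (e : ℕ) (lam : AbacusPartition) : Prop := ¬ ESingular e lam

/-- The induced e-sequence of the display `B`, as a multiset: each bead of
positive weight `w` at position `p` contributes `p, p−e, …, p−(w−1)e`. -/
def inducedSeq (e : ℕ) (B : Finset ℕ) : Multiset ℕ :=
  B.val.bind (fun p => (Multiset.range (beadWeight e B p)).map (fun m => p - m * e))

/-- The product order: `lam ≤_P mu` iff they have the same e-core and e-weight and
`s(mu)_r ≥ s(lam)_r` componentwise for all sufficiently large `r`. -/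
def ProdLE (e : ℕ) (lam mu : AbacusPartition) : Prop :=
  (∃ r, lam.len ≤ r ∧ mu.len ≤ r ∧
    coreBeta e (lam.betaSet r) = coreBeta e (mu.betaSet r)) ∧
  eWeight e lam = eWeight e mu ∧
  ∃ r0, ∀ r, r0 ≤ r →
    List.Forall₂ (· ≤ ·) ((inducedSeq e (lam.betaSet r)).sort (· ≤ ·))
      ((inducedSeq e (mu.betaSet r)).sort (· ≤ ·))

/-!
Both the `e`-weight and the signature of runner `j` only see the runners as one-runner abaci:
the weight is the sum of the sizes of the runner partitions, and the `j`-signature compares each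
row of runner `j` with the same row of runner `j - 1`. With weight `4` and at most six beads per
runner, every runner partition has size at most `4`, so a finite check over the few possible
runners shows that two normal beads between runners with `4, 5` or `5, 6` beads cost weight at
least `2` on that pair, with equality only for the runner partitions `∅` and `(1, 1)`, while
two exceptional pairs sharing runner `a` would cost more than `4`. So the pairs are disjoint,
each carries weight exactly `2` in the form `(∅, (1, 1))`, and all other runners are empty.
-/

def runnerRows (e : ℕ) (B : Finset ℕ) (i : ℕ) : Finset ℕ :=
  (Finset.range (B.sup id + 1)).filter (fun m => i + m * e ∈ B)

section Runners

variable {e : ℕ}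

lemma mod_eq_of_runner {i : ℕ} (hi : i < e) (m : ℕ) : (i + m * e) % e = i := by
  rw [Nat.add_mul_mod_self_right, Nat.mod_eq_of_lt hi]

lemma div_eq_of_runner {i : ℕ} (hi : i < e) (m : ℕ) : (i + m * e) / e = m := by
  rw [Nat.add_mul_div_right _ _ (by omega), Nat.div_eq_of_lt hi, Nat.zero_add]

lemma runner_injective (he : 0 < e) (i : ℕ) : Function.Injective (fun m : ℕ => i + m * e) :=
  fun _ _ h => Nat.eq_of_mul_eq_mul_right he (Nat.add_left_cancel h)

lemma mem_runnerRows (he : 0 < e) {B : Finset ℕ} {i m : ℕ} :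
    m ∈ runnerRows e B i ↔ i + m * e ∈ B := by
  simp only [runnerRows, Finset.mem_filter, Finset.mem_range, and_iff_right_iff_imp]
  intro h
  have hsup : i + m * e ≤ B.sup id := Finset.le_sup (f := id) h
  have hm : m ≤ m * e := Nat.le_mul_of_pos_right m he
  omega

lemma filter_mod_eq_eq_image_runnerRows {i : ℕ} (hi : i < e) (B : Finset ℕ) :
    B.filter (fun p => p % e = i) = (runnerRows e B i).image (fun m => i + m * e) := by
  ext p
  simp only [Finset.mem_filter, Finset.mem_image, mem_runnerRows (by omega : 0 < e)]
  constructor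
  · rintro ⟨hp, rfl⟩
    exact ⟨p / e, by rwa [Nat.mod_add_div'], Nat.mod_add_div' p e⟩
  · rintro ⟨m, hm, rfl⟩
    exact ⟨hm, mod_eq_of_runner hi m⟩

lemma card_runnerRows {i : ℕ} (hi : i < e) (B : Finset ℕ) :
    (runnerRows e B i).card = runnerCount e B i := by
  rw [runnerCount, filter_mod_eq_eq_image_runnerRows hi,
    Finset.card_image_of_injective _ (runner_injective (by omega) i)]

lemma beadWeight_one (S : Finset ℕ) (m : ℕ) :
    beadWeight 1 S m = ((Finset.range m).filter (· ∉ S)).card := by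
  simp only [beadWeight, Nat.mod_one, true_and]

lemma beadWeight_runner {i : ℕ} (hi : i < e) (B : Finset ℕ) (m : ℕ) :
    beadWeight e B (i + m * e) = beadWeight 1 (runnerRows e B i) m := by
  have he : 0 < e := by omega
  rw [beadWeight_one, beadWeight, mod_eq_of_runner hi, ← Finset.card_image_of_injective
    ((Finset.range m).filter (· ∉ runnerRows e B i)) (runner_injective he i)]
  congr 1
  ext q
  simp only [Finset.mem_filter, Finset.mem_range, Finset.mem_image, mem_runnerRows he]
  constructor
  · rintro ⟨hq, rfl, hqB⟩
    refine ⟨q / e, ⟨?_, by rwa [Nat.mod_add_div']⟩, Nat.mod_add_div' q e⟩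
    have := Nat.mod_add_div' q e
    exact Nat.lt_of_mul_lt_mul_right (a := e) (by omega)
  · rintro ⟨n, ⟨hn, hnB⟩, rfl⟩
    exact ⟨by nlinarith, mod_eq_of_runner hi n, hnB⟩

lemma abacusWeight_eq_sum_runnerRows (he : 0 < e) (B : Finset ℕ) :
    abacusWeight e B = ∑ i ∈ Finset.range e, abacusWeight 1 (runnerRows e B i) := by
  rw [abacusWeight, ← Finset.sum_fiberwise_of_maps_to (g := (· % e))
    (fun p _ => Finset.mem_range.2 (Nat.mod_lt p he))]
  refine Finset.sum_congr rfl fun i hi => ?_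
  have hi : i < e := Finset.mem_range.1 hi
  rw [filter_mod_eq_eq_image_runnerRows hi,
    Finset.sum_image fun _ _ _ _ h => runner_injective he i h]
  exact Finset.sum_congr rfl fun m _ => beadWeight_runner hi B m

lemma eq_biUnion_runnerRows (he : 0 < e) (B : Finset ℕ) :
    B = (Finset.range e).biUnion (fun i => (runnerRows e B i).image (fun m => i + m * e)) := by
  ext p
  simp only [Finset.mem_biUnion, Finset.mem_image, Finset.mem_range, mem_runnerRows he]
  constructor
  · intro hp
    exact ⟨p % e, Nat.mod_lt p he, p / e, by rwa [Nat.mod_add_div'], Nat.mod_add_div' p e⟩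
  · rintro ⟨i, -, m, hm, rfl⟩
    exact hm

end Runners

section OneRunner

lemma lt_card_add_abacusWeight_one {S : Finset ℕ} {m : ℕ} (hm : m ∈ S) :
    m < S.card + abacusWeight 1 S := by
  have hgaps : ((Finset.range m).filter (· ∉ S)).card ≤ abacusWeight 1 S := by
    rw [← beadWeight_one]
    exact Finset.single_le_sum (f := beadWeight 1 S) (fun _ _ => Nat.zero_le _) hm
  have hbeads : ((Finset.range m).filter (· ∈ S)).card ≤ (S.erase m).card :=
    Finset.card_le_card fun q hq => by
      simp only [Finset.mem_filter, Finset.mem_range] at hq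
      exact Finset.mem_erase.2 ⟨hq.1.ne, hq.2⟩
  have hsplit := Finset.card_filter_add_card_filter_not (s := Finset.range m) (· ∈ S)
  rw [Finset.card_range] at hsplit
  have := Finset.card_erase_add_one hm
  omega

lemma eq_range_of_abacusWeight_one_eq_zero {S : Finset ℕ} (hw : abacusWeight 1 S = 0) :
    S = Finset.range S.card := by
  have hclosed : ∀ m ∈ S, ∀ k < m, k ∈ S := by
    intro m hm k hk
    by_contra hkS
    have hgap : beadWeight 1 S m = 0 := Finset.sum_eq_zero_iff.1 hw m hm
    rw [beadWeight_one, Finset.card_eq_zero] at hgap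
    exact Finset.notMem_empty k (hgap ▸ Finset.mem_filter.2 ⟨Finset.mem_range.2 hk, hkS⟩)
  refine Finset.eq_of_subset_of_card_le (fun m hm => Finset.mem_range.2 ?_) (by simp)
  by_contra! hmS
  have hsub : Finset.range (m + 1) ⊆ S := fun k hk =>
    (Nat.lt_succ_iff.1 (Finset.mem_range.1 hk)).eq_or_lt.elim (· ▸ hm) (hclosed m hm k)
  have := Finset.card_le_card hsub
  simp only [Finset.card_range] at this
  omega

lemma oneRunnerBeta_nil (c : ℕ) : oneRunnerBeta [] c = Finset.range c := by
  ext k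
  simp only [oneRunnerBeta, Finset.mem_image, Finset.mem_range, List.getD_nil, Nat.zero_add]
  exact ⟨fun ⟨t, ht, hk⟩ => hk ▸ by omega, fun hk => ⟨c - 1 - k, by omega, by omega⟩⟩

end OneRunner

/-- The signature of the runner pair `(T, S)` read row by row (`−` where only `S` has a bead,
`+` where only `T` has one), keeping the number of surviving `+` and of pending `−` signs. -/
def runnerSignStep (T S : Finset ℕ) (st : ℕ × ℕ) (m : ℕ) : ℕ × ℕ :=
  if m ∈ S ∧ m ∉ T then (st.1, st.2 + 1)
  else if m ∉ S ∧ m ∈ T then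
    (match st.2 with
     | 0 => (st.1 + 1, 0)
     | t + 1 => (st.1, t))
  else st

def runnerEps (T S : Finset ℕ) (M : ℕ) : ℕ :=
  ((List.range M).foldl (runnerSignStep T S) (0, 0)).2

section Signature

variable {e : ℕ}

lemma signStep_lengths {res p : ℕ} (hres : 0 < res) (hre : res < e) (B : Finset ℕ)
    (hp : p % e = res) (st : List ℕ × List ℕ) :
    ((signStep B st p).1.length, (signStep B st p).2.length) =
      runnerSignStep (runnerRows e B (res - 1)) (runnerRows e B res)
        (st.1.length, st.2.length) (p / e) := by
  have he : 0 < e := by omega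
  have hpos := Nat.mod_add_div' p e
  have hp0 : p ≠ 0 := by omega
  have hS : p / e ∈ runnerRows e B res ↔ p ∈ B := by
    rw [mem_runnerRows he, ← hp, hpos]
  have hT : p / e ∈ runnerRows e B (res - 1) ↔ p - 1 ∈ B := by
    rw [mem_runnerRows he, show res - 1 + p / e * e = p - 1 by omega]
  obtain ⟨pl, _ | ⟨x, mn⟩⟩ := st <;> by_cases hpB : p ∈ B <;> by_cases hpB' : p - 1 ∈ B <;>
    simp [signStep, runnerSignStep, hS, hT, hp0, hpB, hpB']

lemma foldl_signStep_lengths {res : ℕ} (hres : 0 < res) (hre : res < e) (B : Finset ℕ)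
    (L : List ℕ) (hL : ∀ p ∈ L, p % e = res) (st : List ℕ × List ℕ) :
    ((L.foldl (signStep B) st).1.length, (L.foldl (signStep B) st).2.length) =
      (L.map (· / e)).foldl (runnerSignStep (runnerRows e B (res - 1)) (runnerRows e B res))
        (st.1.length, st.2.length) := by
  induction L generalizing st with
  | nil => rfl
  | cons p L ih =>
    simp only [List.foldl_cons, List.map_cons]
    rw [ih (fun q hq => hL q (List.mem_cons_of_mem _ hq)),
      signStep_lengths hres hre B (hL p List.mem_cons_self)]

lemma map_div_posList {res : ℕ} (hre : res < e) (B : Finset ℕ) :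
    (posList e B res).map (· / e) =
      List.range ((B.sup id + e + 2 + (e - 1 - res)) / e) := by
  have he : 0 < e := by omega
  set N := B.sup id + e + 2
  have hbound : ∀ m, m < (N + (e - 1 - res)) / e ↔ res + m * e < N := by
    intro m
    rw [← Nat.succ_le_iff, Nat.le_div_iff_mul_le he, Nat.succ_mul]
    omega
  have hperm : (posList e B res).Perm ((List.range ((N + (e - 1 - res)) / e)).map
      (fun m => res + m * e)) := by
    refine (List.perm_ext_iff_of_nodup ((List.nodup_range).filter _)
      ((List.nodup_range).map (runner_injective he res))).2 fun p => ?_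
    simp only [List.mem_filter, List.mem_range, List.mem_map, beq_iff_eq, hbound]
    constructor
    · rintro ⟨hpN, rfl⟩
      exact ⟨p / e, by rwa [Nat.mod_add_div'], Nat.mod_add_div' p e⟩
    · rintro ⟨m, hm, rfl⟩
      exact ⟨hm, mod_eq_of_runner hre m⟩
  have hsorted : ((List.range ((N + (e - 1 - res)) / e)).map (fun m => res + m * e)).Pairwise
      (· ≤ ·) :=
    List.pairwise_map.2 (List.pairwise_lt_range.imp fun h =>
      Nat.add_le_add_left (Nat.mul_le_mul_right e h.le) res)
  have hsorted' : (posList e B res).Pairwise (· ≤ ·) :=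
    (List.pairwise_lt_range.filter _).imp Nat.le_of_lt
  rw [List.Perm.eq_of_pairwise' hsorted' hsorted hperm, List.map_map]
  exact (List.map_congr_left fun m _ => div_eq_of_runner hre m).trans (List.map_id _)

lemma runnerEps_add {T S : Finset ℕ} {M : ℕ} (hS : ∀ m ∈ S, m < M) (hT : ∀ m ∈ T, m < M)
    (k : ℕ) : runnerEps T S (M + k) = runnerEps T S M := by
  induction k with
  | zero => rfl
  | succ k ih =>
    have hS' : M + k ∉ S := fun h => by have := hS _ h; omega
    have hT' : M + k ∉ T := fun h => by have := hT _ h; omega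
    rw [← ih, runnerEps, ← Nat.add_assoc, List.range_succ, List.foldl_append]
    simp [runnerSignStep, hS', hT', runnerEps]

lemma runnerEps_eq_of_bounded {T S : Finset ℕ} {M M' : ℕ}
    (hS : ∀ m ∈ S, m < M) (hT : ∀ m ∈ T, m < M) (hS' : ∀ m ∈ S, m < M')
    (hT' : ∀ m ∈ T, m < M') : runnerEps T S M = runnerEps T S M' := by
  rcases Nat.le_total M M' with h | h
  · rw [← Nat.add_sub_cancel' h, runnerEps_add hS hT]
  · rw [← Nat.add_sub_cancel' h, runnerEps_add hS' hT']

lemma epsB_eq_runnerEps {res : ℕ} (hres : 0 < res) (hre : res < e) (B : Finset ℕ) {M : ℕ}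
    (hS : ∀ m ∈ runnerRows e B res, m < M) (hT : ∀ m ∈ runnerRows e B (res - 1), m < M) :
    epsB e B res = runnerEps (runnerRows e B (res - 1)) (runnerRows e B res) M := by
  have he : 0 < e := by omega
  have hbounded : ∀ i ≤ res, ∀ m ∈ runnerRows e B i,
      m < (B.sup id + e + 2 + (e - 1 - res)) / e := by
    intro i hi m hm
    have hsup : i + m * e ≤ B.sup id := Finset.le_sup (f := id) ((mem_runnerRows he).1 hm)
    rw [← Nat.succ_le_iff, Nat.le_div_iff_mul_le he, Nat.succ_mul]
    omega
  have hfold := congrArg Prod.snd (foldl_signStep_lengths hres hre B (posList e B res)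
    (fun p hp => by simpa [posList] using (List.mem_filter.1 hp).2) ([], []))
  rw [map_div_posList hre] at hfold
  rw [epsB, normalList, signState]
  exact hfold.trans
    (runnerEps_eq_of_bounded (hbounded _ le_rfl) (hbounded _ (Nat.sub_le _ _)) hS hT)

end Signature

def partitionsUpToFour : List (List ℕ) :=
  [[], [1], [2], [1, 1], [3], [2, 1], [1, 1, 1], [4], [3, 1], [2, 2], [2, 1, 1], [1, 1, 1, 1]]

def smallBetaSets (k : ℕ) : List (Finset ℕ) := partitionsUpToFour.map (oneRunnerBeta · k)

section SmallRunners

set_option maxRecDepth 100000 in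
lemma mem_smallBetaSets_of_mem_powersetCard :
    ∀ k ∈ [4, 5, 6], ∀ S ∈ Finset.powersetCard k (Finset.range (k + 4)),
      abacusWeight 1 S ≤ 4 → S ∈ smallBetaSets k := by
  decide

lemma mem_smallBetaSets {k : ℕ} (hk : k ∈ [4, 5, 6]) {S : Finset ℕ} (hcard : S.card = k)
    (hw : abacusWeight 1 S ≤ 4) : S ∈ smallBetaSets k := by
  refine mem_smallBetaSets_of_mem_powersetCard k hk S
    (Finset.mem_powersetCard.2 ⟨fun m hm => Finset.mem_range.2 ?_, hcard⟩) hw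
  have := lt_card_add_abacusWeight_one hm
  omega

set_option maxRecDepth 100000 in
lemma weight_of_two_le_runnerEps :
    ∀ k ∈ [4, 5], ∀ T ∈ smallBetaSets k, ∀ S ∈ smallBetaSets (k + 1),
      2 ≤ runnerEps T S 10 → 2 ≤ abacusWeight 1 T + abacusWeight 1 S ∧
        (abacusWeight 1 T + abacusWeight 1 S ≤ 2 →
          abacusWeight 1 T = 0 ∧ S = oneRunnerBeta [1, 1] (k + 1)) := by
  decide

set_option maxRecDepth 100000 in
lemma four_lt_weight_of_two_le_runnerEps_of_two_le_runnerEps :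
    ∀ T ∈ smallBetaSets 4, ∀ S ∈ smallBetaSets 5, ∀ U ∈ smallBetaSets 6,
      2 ≤ runnerEps T S 10 → 2 ≤ runnerEps S U 10 →
        4 < abacusWeight 1 T + abacusWeight 1 S + abacusWeight 1 U := by
  decide

lemma abacusWeight_one_runnerRows_le {e w i : ℕ} {B : Finset ℕ} (hweight : abacusWeight e B = w)
    (hi : i < e) : abacusWeight 1 (runnerRows e B i) ≤ w := by
  have hle := Finset.single_le_sum (f := fun i => abacusWeight 1 (runnerRows e B i))
    (fun _ _ => Nat.zero_le _) (Finset.mem_range.2 hi)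
  rwa [← abacusWeight_eq_sum_runnerRows (by omega), hweight] at hle

lemma runnerRows_mem_smallBetaSets {e i : ℕ} {B : Finset ℕ} (hweight : abacusWeight e B = 4)
    (hi : i < e) (hk : runnerCount e B i ∈ [4, 5, 6]) :
    runnerRows e B i ∈ smallBetaSets (runnerCount e B i) :=
  mem_smallBetaSets hk (card_runnerRows hi B) (abacusWeight_one_runnerRows_le hweight hi)

lemma epsB_eq_runnerEps_ten {e j : ℕ} {B : Finset ℕ} (hweight : abacusWeight e B = 4)
    (hcount : ∀ i < e, runnerCount e B i ≤ 6) (hj : 0 < j) (hje : j < e) :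
    epsB e B j = runnerEps (runnerRows e B (j - 1)) (runnerRows e B j) 10 := by
  have hrows (i : ℕ) (hi : i < e) (m : ℕ) (hm : m ∈ runnerRows e B i) : m < 10 := by
    have := lt_card_add_abacusWeight_one hm
    rw [card_runnerRows hi] at this
    have := hcount i hi
    have := abacusWeight_one_runnerRows_le hweight hi
    omega
  exact epsB_eq_runnerEps hj hje B (hrows j hje) (hrows (j - 1) (by omega))

end SmallRunners

lemma sum_map_le_sum_range {w : ℕ → ℕ} {l : List ℕ} {n : ℕ} (hnd : l.Nodup)
    (hl : ∀ i ∈ l, i < n) : (l.map w).sum ≤ ∑ i ∈ Finset.range n, w i := by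
  rw [← List.sum_toFinset w hnd]
  exact Finset.sum_le_sum_of_subset fun i hi => Finset.mem_range.2 (hl i (List.mem_toFinset.1 hi))

lemma runners_of_two_le_runnerEps {e a b : ℕ} (R : ℕ → Finset ℕ)
    (hsum : ∑ i ∈ Finset.range e, abacusWeight 1 (R i) = 4) (ha : 0 < a) (hab : a < b)
    (hbe : b < e) (hTa : R (a - 1) ∈ smallBetaSets 4) (hSa : R a ∈ smallBetaSets 5)
    (hTb : R (b - 1) ∈ smallBetaSets 5) (hSb : R b ∈ smallBetaSets 6)
    (hεa : 2 ≤ runnerEps (R (a - 1)) (R a) 10) (hεb : 2 ≤ runnerEps (R (b - 1)) (R b) 10) :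
    a + 2 ≤ b ∧ R a = oneRunnerBeta [1, 1] 5 ∧ R b = oneRunnerBeta [1, 1] 6 ∧
      ∀ i < e, i ≠ a → i ≠ b → abacusWeight 1 (R i) = 0 := by
  have hsub (l : List ℕ) (hnd : l.Nodup) (hl : ∀ i ∈ l, i < e) :
      (l.map fun i => abacusWeight 1 (R i)).sum ≤ 4 :=
    hsum ▸ sum_map_le_sum_range hnd hl
  obtain ⟨hwa, hwa'⟩ := weight_of_two_le_runnerEps 4 (by simp) _ hTa _ hSa hεa
  obtain ⟨hwb, hwb'⟩ := weight_of_two_le_runnerEps 5 (by simp) _ hTb _ hSb hεb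
  have hab2 : a + 2 ≤ b := by
    by_contra! hb
    obtain rfl : b = a + 1 := by omega
    rw [Nat.add_sub_cancel] at hεb
    have hle := hsub [a - 1, a, a + 1] (by simp; omega) (by simp; omega)
    have hlt := four_lt_weight_of_two_le_runnerEps_of_two_le_runnerEps _ hTa _ hSa _ hSb hεa hεb
    simp only [List.map_cons, List.map_nil, List.sum_cons, List.sum_nil] at hle
    omega
  have h4 := hsub [a - 1, a, b - 1, b] (by simp; omega) (by simp; omega)
  simp only [List.map_cons, List.map_nil, List.sum_cons, List.sum_nil] at h4
  obtain ⟨hTa0, hRa⟩ := hwa' (by omega)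
  obtain ⟨hTb0, hRb⟩ := hwb' (by omega)
  refine ⟨hab2, hRa, hRb, fun i hi hia hib => ?_⟩
  by_cases hia' : i = a - 1
  · exact hia' ▸ hTa0
  by_cases hib' : i = b - 1
  · exact hib' ▸ hTb0
  have h5 := hsub [i, a - 1, a, b - 1, b] (by simp; omega) (by simp; omega)
  simp only [List.map_cons, List.map_nil, List.sum_cons, List.sum_nil] at h5
  omega

theorem stmt13_general (e a b c d : ℕ) (ha : 0 < a) (hab : a < b) (hbc : b < c)
    (hcd : c ≤ d) (hde : d ≤ e) (bd : ℕ → ℕ)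
    (hbd : bd = fun i => if i < a then 4 else if i < b then 5 else
      if i < c then 6 else if i < d then 5 else 4)
    (r : ℕ) (hr : r = (Finset.range e).sum bd)
    (lam : AbacusPartition) (hlam : inBlock e bd 4 lam)
    (B : Finset ℕ) (hB : B = lam.betaSet r)
    (hexc : 2 ≤ epsB e B a ∧ 2 ≤ epsB e B b) :
    a + 2 ≤ b ∧ B = display e bd (fun m => if m = a ∨ m = b then [1, 1] else []) := by
  obtain ⟨-, hcount, hweight⟩ := hlam
  rw [← hr, ← hB] at hcount hweight
  have he : 0 < e := by omega
  have hbd_mem (i : ℕ) : bd i ∈ [4, 5, 6] := by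
    subst hbd; simp only; split_ifs <;> simp
  obtain ⟨h4, h5, h5', h6⟩ : bd (a - 1) = 4 ∧ bd a = 5 ∧ bd (b - 1) = 5 ∧ bd b = 6 := by
    subst hbd; refine ⟨?_, ?_, ?_, ?_⟩ <;> simp only <;> split_ifs <;> omega
  have hsmall (i : ℕ) (hi : i < e) : runnerRows e B i ∈ smallBetaSets (bd i) :=
    hcount i hi ▸ runnerRows_mem_smallBetaSets hweight hi (hcount i hi ▸ hbd_mem i)
  have hcount_le (i : ℕ) (hi : i < e) : runnerCount e B i ≤ 6 := by
    have := hbd_mem i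
    simp only [List.mem_cons, List.not_mem_nil, or_false] at this
    rw [hcount i hi]
    omega
  have hεeq (j : ℕ) (hj : 0 < j) (hje : j < e) := epsB_eq_runnerEps_ten hweight hcount_le hj hje
  obtain ⟨hab2, hRa, hRb, hrest⟩ := runners_of_two_le_runnerEps (runnerRows e B)
    ((abacusWeight_eq_sum_runnerRows he B).symm.trans hweight) ha hab (by omega)
    (h4 ▸ hsmall _ (by omega)) (h5 ▸ hsmall _ (by omega)) (h5' ▸ hsmall _ (by omega))
    (h6 ▸ hsmall _ (by omega)) (hεeq a ha (by omega) ▸ hexc.1)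
    (hεeq b (by omega) (by omega) ▸ hexc.2)
  refine ⟨hab2, (eq_biUnion_runnerRows he B).trans (Finset.biUnion_congr rfl fun i hi => ?_)⟩
  rw [Finset.mem_range] at hi
  congr 1
  dsimp only
  split_ifs with hiab
  · rcases hiab with rfl | rfl
    · rw [h5]; exact hRa
    · rw [h6]; exact hRb
  · obtain ⟨hia, hib⟩ := not_or.1 hiab
    rw [oneRunnerBeta_nil, ← hcount i hi, ← card_runnerRows hi]
    exact eq_range_of_abacusWeight_one_eq_zero (hrest i hi hia hib)

/-- if a partition of the block
`⟨4^a, 5^{b−a}, 6^{c−b}, 5^{d−c}, 4^{e−d}⟩` is exceptional for both of its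
`[4:1]`-pairs (via runners `a` and `b`), then `b − a ≥ 2` and the partition is
`⟨a_{(1,1)}, b_{(1,1)}⟩`. -/
theorem stmt13 (e a b c d : ℕ) (he : 3 ≤ e) (ha : 0 < a) (hab : a < b) (hbc : b < c)
    (hcd : c ≤ d) (hde : d ≤ e) (bd : ℕ → ℕ)
    (hbd : bd = fun i => if i < a then 4 else if i < b then 5 else
      if i < c then 6 else if i < d then 5 else 4)
    (r : ℕ) (hr : r = (Finset.range e).sum bd)
    (lam : AbacusPartition) (hlam : inBlock e bd 4 lam)
    (B : Finset ℕ) (hB : B = lam.betaSet r)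
    (hexc : 2 ≤ epsB e B a ∧ 2 ≤ epsB e B b) :
    a + 2 ≤ b ∧ B = display e bd (fun m => if m = a ∨ m = b then [1, 1] else []) :=
  stmt13_general e a b c d ha hab hbc hcd hde bd hbd r hr lam hlam B hB hexc
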